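/- Let b : ℝ → ℝ be any function such that for every h > 0 one has 0 < b(h) < 3 and F(b(h), h) = 0, and let β∞ be the unique β > 0 satisfying 3 − (1+β)^{1/4} − (4+β)^{1/4} = 0. Then e^{2h}·(b(h) − β∞) tends to −12/((1+β∞)^{−3/4} + (4+β∞)^{−3/4}) as h → ∞; i.e., β*(h) = β∞ − 12·e^{−2h}/((1+β∞)^{−3/4} + (4+β∞)^{−3/4}) + o(e^{−2h}) as h → ∞. -/

import Mathlib

noncomputable def F (β h : ℝ) : ℝ :=
  3 * Real.sqrt (Real.tanh h)
    - (1 + β) ^ ((1 : ℝ) / 4) * Real.sqrt (Real.tanh (h * Real.sqrt (1 + β)))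
    - (4 + β) ^ ((1 : ℝ) / 4) * Real.sqrt (Real.tanh (h * Real.sqrt (4 + β)))

open Real Filter Topology

private lemma tanh_formula (x : ℝ) : Real.tanh x = 1 - 2 / (Real.exp (2 * x) + 1) := by
  rw [Real.tanh_eq_sinh_div_cosh, Real.sinh_eq, Real.cosh_eq]
  have h1 := Real.exp_pos x
  have h2 : Real.exp (2 * x) = Real.exp x * Real.exp x := by rw [← Real.exp_add]; ring_nf
  rw [Real.exp_neg, h2]
  have h3 : (0:ℝ) < Real.exp x * Real.exp x + 1 := by positivity
  field_simp
  ring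

private lemma tanh_mono {x y : ℝ} (h : x < y) : Real.tanh x < Real.tanh y := by
  rw [tanh_formula, tanh_formula]
  have h1 : Real.exp (2 * x) < Real.exp (2 * y) := Real.exp_lt_exp.mpr (by linarith)
  have h2 : (0:ℝ) < Real.exp (2 * x) + 1 := by positivity
  have : 2 / (Real.exp (2 * y) + 1) < 2 / (Real.exp (2 * x) + 1) := by gcongr <;> linarith
  linarith

private lemma tanh_nonneg' {x : ℝ} (hx : 0 ≤ x) : 0 ≤ Real.tanh x := by
  rw [tanh_formula]
  have h1 : (1:ℝ) ≤ Real.exp (2 * x) := Real.one_le_exp (by linarith)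
  have h2 : (0:ℝ) < Real.exp (2 * x) + 1 := by positivity
  have : 2 / (Real.exp (2 * x) + 1) ≤ 1 := by rw [div_le_one h2]; linarith
  linarith

private lemma tanh_lt_one' (x : ℝ) : Real.tanh x < 1 := by
  rw [tanh_formula]
  have h2 : (0:ℝ) < Real.exp (2 * x) + 1 := by positivity
  have : 0 < 2 / (Real.exp (2 * x) + 1) := by positivity
  linarith

private lemma tanh_pos' {x : ℝ} (hx : 0 < x) : 0 < Real.tanh x := by
  have : Real.tanh 0 < Real.tanh x := tanh_mono hx
  rw [tanh_formula 0] at this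
  norm_num at this
  exact this

private lemma sqrt_tanh_lt_one (x : ℝ) : Real.sqrt (Real.tanh x) < 1 := by
  rcases le_or_gt (Real.tanh x) 0 with h | h
  · rw [Real.sqrt_eq_zero_of_nonpos h]; norm_num
  · have := Real.sqrt_lt_sqrt h.le (tanh_lt_one' x)
    simpa using this

private lemma one_sub_sqrt_tanh_bounds {t : ℝ} (ht : 0 ≤ t) :
    0 ≤ 1 - Real.sqrt (Real.tanh t) ∧
      1 - Real.sqrt (Real.tanh t) ≤ 2 * Real.exp (-(2 * t)) := by
  have h0 : 0 ≤ Real.tanh t := tanh_nonneg' ht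
  have h1 : Real.tanh t < 1 := tanh_lt_one' t
  have hs1 : Real.sqrt (Real.tanh t) < 1 := sqrt_tanh_lt_one t
  have hts : Real.tanh t ≤ Real.sqrt (Real.tanh t) := by
    nlinarith [Real.sq_sqrt h0, Real.sqrt_nonneg (Real.tanh t), sqrt_tanh_lt_one t]
  refine ⟨by linarith, ?_⟩
  have h2 : 1 - Real.tanh t = 2 / (Real.exp (2 * t) + 1) := by rw [tanh_formula]; ring
  have hE : (0:ℝ) < Real.exp (2 * t) := Real.exp_pos _
  have h3 : 2 / (Real.exp (2 * t) + 1) ≤ 2 / Real.exp (2 * t) := by gcongr <;> linarith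
  have h4 : 2 / Real.exp (2 * t) = 2 * Real.exp (-(2 * t)) := by
    rw [Real.exp_neg]; ring
  linarith

noncomputable def Gfun (β : ℝ) : ℝ := 3 - (1 + β) ^ ((1:ℝ)/4) - (4 + β) ^ ((1:ℝ)/4)

private lemma Gfun_anti {x y : ℝ} (hx : 0 ≤ x) (hxy : x < y) : Gfun y < Gfun x := by
  unfold Gfun
  have h1 : (1 + x) ^ ((1:ℝ)/4) < (1 + y) ^ ((1:ℝ)/4) :=
    Real.rpow_lt_rpow (by linarith) (by linarith) (by norm_num)
  have h2 : (4 + x) ^ ((1:ℝ)/4) < (4 + y) ^ ((1:ℝ)/4) :=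
    Real.rpow_lt_rpow (by linarith) (by linarith) (by norm_num)
  linarith

private lemma Gfun_anti_le {x y : ℝ} (hx : 0 ≤ x) (hxy : x ≤ y) : Gfun y ≤ Gfun x := by
  rcases eq_or_lt_of_le hxy with rfl | h
  · exact le_refl _
  · exact (Gfun_anti hx h).le

private lemma rpow_quarter_le_two {a : ℝ} (h0 : 0 ≤ a) (h16 : a ≤ 16) : a ^ ((1:ℝ)/4) ≤ 2 := by
  have h2 : (16:ℝ) ^ ((1:ℝ)/4) = 2 := by
    rw [show (16:ℝ) = 2 ^ (4:ℕ) by norm_num, ← Real.rpow_natCast 2 4,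
      ← Real.rpow_mul (by norm_num)]
    norm_num
  calc a ^ ((1:ℝ)/4) ≤ (16:ℝ) ^ ((1:ℝ)/4) := Real.rpow_le_rpow h0 h16 (by norm_num)
    _ = 2 := h2

private lemma hasDerivAt_Gfun {β : ℝ} (hβ : 0 < β) :
    HasDerivAt Gfun (-(((1 + β) ^ (-(3:ℝ)/4) + (4 + β) ^ (-(3:ℝ)/4)) / 4)) β := by
  have hadd1 : HasDerivAt (fun x : ℝ => 1 + x) 1 β := by
    simpa using (hasDerivAt_id β).const_add (1:ℝ)
  have hadd4 : HasDerivAt (fun x : ℝ => 4 + x) 1 β := by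
    simpa using (hasDerivAt_id β).const_add (4:ℝ)
  have h1 : HasDerivAt (fun x : ℝ => (1 + x) ^ ((1:ℝ)/4))
      ((1:ℝ)/4 * (1 + β) ^ ((1:ℝ)/4 - 1)) β := by
    have := (Real.hasDerivAt_rpow_const (x := 1 + β) (p := (1:ℝ)/4)
      (Or.inl (by positivity))).comp β hadd1
    simpa [Function.comp_def] using this
  have h2 : HasDerivAt (fun x : ℝ => (4 + x) ^ ((1:ℝ)/4))
      ((1:ℝ)/4 * (4 + β) ^ ((1:ℝ)/4 - 1)) β := by
    have := (Real.hasDerivAt_rpow_const (x := 4 + β) (p := (1:ℝ)/4)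
      (Or.inl (by positivity))).comp β hadd4
    simpa [Function.comp_def] using this
  have h3 := ((hasDerivAt_const β (3:ℝ)).sub h1).sub h2
  have he : ((1:ℝ)/4 - 1) = -(3:ℝ)/4 := by norm_num
  rw [he] at h3
  exact h3.congr_deriv (by ring)


private lemma exp_two_mul_atTop : Tendsto (fun h : ℝ => Real.exp (2 * h)) atTop atTop := by
  apply Real.tendsto_exp_atTop.comp
  exact Tendsto.const_mul_atTop two_pos tendsto_id

private lemma six_exp_neg : Tendsto (fun h : ℝ => 6 * Real.exp (-(2 * h))) atTop (𝓝 0) := by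
  have h1 : Tendsto (fun h : ℝ => (-2 : ℝ) * h) atTop atBot :=
    tendsto_id.const_mul_atTop_of_neg (by norm_num)
  have h2 : Tendsto (fun h : ℝ => Real.exp ((-2 : ℝ) * h)) atTop (𝓝 0) :=
    Real.tendsto_exp_atBot.comp h1
  simp only [neg_mul] at h2
  simpa using h2.const_mul (6:ℝ)

private lemma four_exp_bb {s : ℝ} (hs : 1 < s) :
    Tendsto (fun h : ℝ => 4 * Real.exp ((2 - 2 * s) * h)) atTop (𝓝 0) := by
  have h1 : Tendsto (fun h : ℝ => (2 - 2 * s) * h) atTop atBot :=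
    tendsto_id.const_mul_atTop_of_neg (by linarith)
  have h2 : Tendsto (fun h : ℝ => Real.exp ((2 - 2 * s) * h)) atTop (𝓝 0) :=
    Real.tendsto_exp_atBot.comp h1
  simpa using h2.const_mul (4:ℝ)

private lemma inv_exp_add_one : Tendsto (fun h : ℝ => (Real.exp (2 * h) + 1)⁻¹) atTop (𝓝 0) :=
  (tendsto_atTop_add_const_right _ 1 exp_two_mul_atTop).inv_tendsto_atTop

private lemma tanh_tendsto_one : Tendsto Real.tanh atTop (𝓝 1) := by
  have h2 : Tendsto (fun h : ℝ => 1 - 2 * (Real.exp (2 * h) + 1)⁻¹) atTop (𝓝 1) := by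
    have := (tendsto_const_nhds (x := (1:ℝ)) (f := atTop)).sub (inv_exp_add_one.const_mul (2:ℝ))
    simpa using this
  refine h2.congr fun h => ?_
  rw [tanh_formula]; ring

private lemma sqrt_tanh_tendsto_one :
    Tendsto (fun h : ℝ => Real.sqrt (Real.tanh h)) atTop (𝓝 1) := by
  have := (Real.continuous_sqrt.tendsto 1).comp tanh_tendsto_one
  simpa [Function.comp_def] using this

private lemma exp_one_sub_tanh :
    Tendsto (fun h : ℝ => Real.exp (2 * h) * (1 - Real.tanh h)) atTop (𝓝 2) := by
  have key : Tendsto (fun h : ℝ => 2 * (1 - (Real.exp (2 * h) + 1)⁻¹)) atTop (𝓝 2) := by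
    have := ((tendsto_const_nhds (x := (1:ℝ)) (f := atTop)).sub inv_exp_add_one).const_mul (2:ℝ)
    simpa using this
  refine key.congr fun h => ?_
  have hp : (0:ℝ) < Real.exp (2 * h) + 1 := by positivity
  rw [tanh_formula]
  field_simp
  ring

private lemma L1 : Tendsto (fun h : ℝ => Real.exp (2 * h) * (1 - Real.sqrt (Real.tanh h)))
    atTop (𝓝 1) := by
  have hden : Tendsto (fun h : ℝ => (1 + Real.sqrt (Real.tanh h))⁻¹) atTop (𝓝 (2:ℝ)⁻¹) := by
    have := ((tendsto_const_nhds (x := (1:ℝ)) (f := atTop)).add sqrt_tanh_tendsto_one).inv₀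
      (by norm_num)
    have h12 : ((1:ℝ) + 1)⁻¹ = (2:ℝ)⁻¹ := by norm_num
    rw [h12] at this
    exact this
  have hprod := exp_one_sub_tanh.mul hden
  have hval2 : (2:ℝ) * (2:ℝ)⁻¹ = 1 := by norm_num
  rw [hval2] at hprod
  refine hprod.congr' ?_
  filter_upwards [eventually_ge_atTop (0:ℝ)] with h hh
  have h0 : 0 ≤ Real.tanh h := tanh_nonneg' hh
  have hsq : Real.sqrt (Real.tanh h) ^ 2 = Real.tanh h := Real.sq_sqrt h0
  have hpos : (0:ℝ) < 1 + Real.sqrt (Real.tanh h) := by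
    have := Real.sqrt_nonneg (Real.tanh h); linarith
  field_simp
  nlinarith [hsq, Real.exp_pos (2 * h)]

set_option maxHeartbeats 1000000 in
/-- With `b` and `βinf` as before,
`e^{2h}(b h − βinf) → −12/((1+βinf)^{−3/4} + (4+βinf)^{−3/4})` as `h → ∞`. -/
theorem stmt8 (b : ℝ → ℝ)
    (hb : ∀ h : ℝ, 0 < h → 0 < b h ∧ b h < 3 ∧ F (b h) h = 0)
    (βinf : ℝ) (hβpos : 0 < βinf)
    (hβroot : 3 - (1 + βinf) ^ ((1 : ℝ) / 4) - (4 + βinf) ^ ((1 : ℝ) / 4) = 0)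
    (hβuniq : ∀ β : ℝ, 0 < β →
      3 - (1 + β) ^ ((1 : ℝ) / 4) - (4 + β) ^ ((1 : ℝ) / 4) = 0 → β = βinf) :
    Filter.Tendsto (fun h => Real.exp (2 * h) * (b h - βinf)) Filter.atTop
      (nhds (-12 / ((1 + βinf) ^ (-(3 : ℝ) / 4) + (4 + βinf) ^ (-(3 : ℝ) / 4)))) := by
  have hGinf : Gfun βinf = 0 := hβroot
  set c : ℝ := (1 + βinf) ^ (-(3:ℝ)/4) + (4 + βinf) ^ (-(3:ℝ)/4) with hcdef
  have hc : 0 < c :=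
    add_pos (Real.rpow_pos_of_pos (by linarith) _) (Real.rpow_pos_of_pos (by linarith) _)
  -- positivity of G at b h
  have hGpos : ∀ h : ℝ, 0 < h → 0 < Gfun (b h) := by
    intro h hh
    obtain ⟨hb0, hb3, hF⟩ := hb h hh
    simp only [F] at hF
    set t := Real.sqrt (Real.tanh h) with htdef
    set u := Real.sqrt (Real.tanh (h * Real.sqrt (1 + b h))) with hudef
    set v := Real.sqrt (Real.tanh (h * Real.sqrt (4 + b h))) with hvdef
    set p := (1 + b h) ^ ((1:ℝ)/4) with hpdef
    set q := (4 + b h) ^ ((1:ℝ)/4) with hqdef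
    have hp : 0 < p := Real.rpow_pos_of_pos (by linarith) _
    have hq : 0 < q := Real.rpow_pos_of_pos (by linarith) _
    have ht : 0 < t := Real.sqrt_pos.mpr (tanh_pos' hh)
    have hs1 : 1 < Real.sqrt (1 + b h) := by
      have : Real.sqrt 1 < Real.sqrt (1 + b h) := Real.sqrt_lt_sqrt (by norm_num) (by linarith)
      simpa using this
    have hs4 : 1 < Real.sqrt (4 + b h) := by
      have : Real.sqrt 1 < Real.sqrt (4 + b h) := Real.sqrt_lt_sqrt (by norm_num) (by linarith)
      simpa using this
    have hu : t < u :=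
      Real.sqrt_lt_sqrt (tanh_nonneg' hh.le) (tanh_mono (by nlinarith))
    have hv : t < v :=
      Real.sqrt_lt_sqrt (tanh_nonneg' hh.le) (tanh_mono (by nlinarith))
    have hGeq : Gfun (b h) = 3 - p - q := rfl
    rw [hGeq]
    by_contra hcon
    push_neg at hcon
    nlinarith [mul_lt_mul_of_pos_left hu hp, mul_lt_mul_of_pos_left hv hq]
  have hblt : ∀ h : ℝ, 0 < h → b h < βinf := by
    intro h hh
    by_contra hcon
    push_neg at hcon
    have := Gfun_anti_le hβpos.le hcon
    rw [hGinf] at this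
    linarith [hGpos h hh]
  have hbne : ∀ h : ℝ, 0 < h → b h ≠ βinf := fun h hh => (hblt h hh).ne
  -- key identity and bound
  have hGid : ∀ h : ℝ, 0 < h → Gfun (b h) =
      3 * (1 - Real.sqrt (Real.tanh h))
      - (1 + b h) ^ ((1:ℝ)/4) * (1 - Real.sqrt (Real.tanh (h * Real.sqrt (1 + b h))))
      - (4 + b h) ^ ((1:ℝ)/4) * (1 - Real.sqrt (Real.tanh (h * Real.sqrt (4 + b h)))) := by
    intro h hh
    obtain ⟨hb0, hb3, hF⟩ := hb h hh
    simp only [F] at hF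
    unfold Gfun
    linarith [hF]
  have hGbound : ∀ h : ℝ, 0 < h → Gfun (b h) ≤ 6 * Real.exp (-(2 * h)) := by
    intro h hh
    obtain ⟨hb0, hb3, hF⟩ := hb h hh
    rw [hGid h hh]
    obtain ⟨h1a, h1b⟩ := one_sub_sqrt_tanh_bounds hh.le
    have hp : 0 < (1 + b h) ^ ((1:ℝ)/4) := Real.rpow_pos_of_pos (by linarith) _
    have hq : 0 < (4 + b h) ^ ((1:ℝ)/4) := Real.rpow_pos_of_pos (by linarith) _
    have hs1 : (0:ℝ) ≤ h * Real.sqrt (1 + b h) := by positivity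
    have hs4 : (0:ℝ) ≤ h * Real.sqrt (4 + b h) := by positivity
    obtain ⟨h2a, _⟩ := one_sub_sqrt_tanh_bounds hs1
    obtain ⟨h3a, _⟩ := one_sub_sqrt_tanh_bounds hs4
    nlinarith [mul_nonneg hp.le h2a, mul_nonneg hq.le h3a]
  -- convergence of b to βinf
  have hexp0 := six_exp_neg
  have hblim : Tendsto b atTop (𝓝 βinf) := by
    rw [Metric.tendsto_nhds]
    intro ε hε
    set ε' := min ε (βinf / 2) with hε'def
    have hε'pos : 0 < ε' := lt_min hε (by linarith)
    have hε'le : ε' ≤ ε := min_le_left _ _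
    have hε'le2 : ε' ≤ βinf / 2 := min_le_right _ _
    have hδ : 0 < Gfun (βinf - ε') := by
      have := Gfun_anti (x := βinf - ε') (y := βinf) (by linarith) (by linarith)
      rw [hGinf] at this; linarith
    filter_upwards [hexp0.eventually_lt_const hδ, eventually_gt_atTop (0:ℝ)] with h h1 h2
    rw [Real.dist_eq, abs_lt]
    have h4 := hblt h h2
    constructor
    · by_contra hcon
      push_neg at hcon
      have hble : b h ≤ βinf - ε' := by linarith
      have := Gfun_anti_le (hb h h2).1.le hble
      linarith [hGbound h h2]
    · linarith
  -- limit of exp(2h) * G(b h)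
  have hL1 := L1
  -- the correction terms
  have hbev : ∀ᶠ h in atTop, βinf / 2 < b h :=
    hblim.eventually (eventually_gt_nhds (by linarith))
  have hs : 1 < Real.sqrt (1 + βinf / 2) := by
    have : Real.sqrt 1 < Real.sqrt (1 + βinf / 2) :=
      Real.sqrt_lt_sqrt (by norm_num) (by linarith)
    simpa using this
  set s : ℝ := Real.sqrt (1 + βinf / 2) with hsdef
  have hbb := four_exp_bb hs
  have hT : ∀ a : ℝ, 1 ≤ a → a ≤ 4 →
      Tendsto (fun h : ℝ => Real.exp (2 * h) * ((a + b h) ^ ((1:ℝ)/4)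
        * (1 - Real.sqrt (Real.tanh (h * Real.sqrt (a + b h)))))) atTop (𝓝 0) := by
    intro a ha1 ha4
    apply tendsto_of_tendsto_of_tendsto_of_le_of_le' tendsto_const_nhds hbb
    · filter_upwards [eventually_gt_atTop (0:ℝ)] with h hh
      obtain ⟨hb0, hb3, _⟩ := hb h hh
      have harg : (0:ℝ) ≤ h * Real.sqrt (a + b h) := by positivity
      obtain ⟨hx, _⟩ := one_sub_sqrt_tanh_bounds harg
      have hp : (0:ℝ) ≤ (a + b h) ^ ((1:ℝ)/4) := (Real.rpow_pos_of_pos (by linarith) _).le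
      positivity
    · filter_upwards [eventually_gt_atTop (0:ℝ), hbev] with h hh hbh
      obtain ⟨hb0, hb3, _⟩ := hb h hh
      have harg : (0:ℝ) ≤ h * Real.sqrt (a + b h) := by positivity
      obtain ⟨hx, hy⟩ := one_sub_sqrt_tanh_bounds harg
      have hp2 : (a + b h) ^ ((1:ℝ)/4) ≤ 2 :=
        rpow_quarter_le_two (by linarith) (by linarith)
      have hp0 : (0:ℝ) ≤ (a + b h) ^ ((1:ℝ)/4) := (Real.rpow_pos_of_pos (by linarith) _).le
      have hsle : s ≤ Real.sqrt (a + b h) := by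
        rw [hsdef]; exact Real.sqrt_le_sqrt (by linarith)
      have hexpm : Real.exp (-(2 * (h * Real.sqrt (a + b h)))) ≤ Real.exp (-(2 * (h * s))) := by
        apply Real.exp_le_exp.mpr
        nlinarith
      have hkey : Real.exp (2 * h) * Real.exp (-(2 * (h * s))) = Real.exp ((2 - 2 * s) * h) := by
        rw [← Real.exp_add]; ring_nf
      calc Real.exp (2 * h) * ((a + b h) ^ ((1:ℝ)/4)
            * (1 - Real.sqrt (Real.tanh (h * Real.sqrt (a + b h)))))
          ≤ Real.exp (2 * h) * (2 * (2 * Real.exp (-(2 * (h * s))))) := by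
            have hb1 : (1 - Real.sqrt (Real.tanh (h * Real.sqrt (a + b h))))
                ≤ 2 * Real.exp (-(2 * (h * s))) := le_trans hy (by nlinarith [Real.exp_pos (-(2 * (h * Real.sqrt (a + b h))))])
            have := mul_le_mul hp2 hb1 hx (by norm_num)
            nlinarith [Real.exp_pos (2 * h)]
        _ = 4 * Real.exp ((2 - 2 * s) * h) := by rw [← hkey]; ring
  have hT1 := hT 1 (le_refl 1) (by norm_num)
  have hT4 := hT 4 (by norm_num) (le_refl 4)
  have hGlim : Tendsto (fun h => Real.exp (2 * h) * Gfun (b h)) atTop (𝓝 3) := by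
    have hcomb : Tendsto (fun h : ℝ =>
        3 * (Real.exp (2 * h) * (1 - Real.sqrt (Real.tanh h)))
        - Real.exp (2 * h) * ((1 + b h) ^ ((1:ℝ)/4)
            * (1 - Real.sqrt (Real.tanh (h * Real.sqrt (1 + b h)))))
        - Real.exp (2 * h) * ((4 + b h) ^ ((1:ℝ)/4)
            * (1 - Real.sqrt (Real.tanh (h * Real.sqrt (4 + b h)))))) atTop (𝓝 3) := by
      have := ((hL1.const_mul (3:ℝ)).sub hT1).sub hT4
      simpa using this
    refine hcomb.congr' ?_
    filter_upwards [eventually_gt_atTop (0:ℝ)] with h hh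
    rw [hGid h hh]
    ring
  -- slope part
  have hder : HasDerivAt Gfun (-(c / 4)) βinf := hasDerivAt_Gfun hβpos
  have hs1 : Tendsto (fun h => slope Gfun βinf (b h)) atTop (𝓝 (-(c / 4))) := by
    apply (hasDerivAt_iff_tendsto_slope.mp hder).comp
    rw [tendsto_nhdsWithin_iff]
    exact ⟨hblim, by filter_upwards [eventually_gt_atTop (0:ℝ)] with h hh
                     exact hbne h hh⟩
  have hcne : -(c / 4) ≠ 0 := by
    have hc4 : (0:ℝ) < c / 4 := div_pos hc (by norm_num)
    simpa using hc4.ne'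
  have hs2 : Tendsto (fun h => (b h - βinf) / Gfun (b h)) atTop (𝓝 (-(c / 4))⁻¹) := by
    have := hs1.inv₀ hcne
    refine this.congr fun h => ?_
    rw [slope_def_field, hGinf, sub_zero, inv_div]
  have hmul := hGlim.mul hs2
  have hval : 3 * (-(c / 4))⁻¹ = -12 / c := by
    field_simp [hc.ne']
    ring
  rw [hval] at hmul
  refine hmul.congr' ?_
  filter_upwards [eventually_gt_atTop (0:ℝ)] with h hh
  have hG := hGpos h hh
  field_simp
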